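/- arXiv:2204.06261 — 4 statements merged into one kernel-verified Lean document; each statement's English description precedes it below -/
import Mathlib

section
/- Fix δ ∈ (0, 1/2) and ε ∈ (0, 1/2). Let A : ℕ → ℝ be multiplicative with A(1) = 1, satisfying the Rankin–Selberg bound with constant C ≥ 1 and the prime-power lower bound. Then there exist c > 0 and X₀ such that for all X ≥ X₀ and M = X^δ: Σ_{(m,k): M < m ≤ 2M, gcd(m,k)=1, X ≤ mk ≤ 2X} |A(mk)| ≥ c·X^{1−ε/2}. -/
open Finset Filter

private lemma pp_dvd_subset {p : ℕ} (hp : p.Prime) {a b : ℕ} (ha : 1 ≤ a) (hb : b ≤ 2 * a) :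
    ((Finset.Icc a b).filter (fun k => IsPrimePow k ∧ p ∣ k)) ⊆
      {p ^ Nat.log p a, p ^ (Nat.log p a + 1)} := by
  intro k hk
  simp only [Finset.mem_filter, Finset.mem_Icc] at hk
  obtain ⟨⟨hak, hkb⟩, hppk, hpk⟩ := hk
  obtain ⟨q, j, hq, hj, rfl⟩ := hppk
  have hq' : q.Prime := Nat.prime_iff.mpr hq
  have hpq : p = q := (Nat.prime_dvd_prime_iff_eq hp hq').mp (hp.dvd_of_dvd_pow hpk)
  subst hpq
  set e := Nat.log p a with he
  have h1 : p ^ e ≤ a := Nat.pow_log_le_self p (by omega)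
  have h2 : a < p ^ (e + 1) := Nat.lt_pow_succ_log_self hp.one_lt a
  have hj1 : e ≤ j := by
    have hle : p ^ e ≤ p ^ j := le_trans h1 hak
    exact (Nat.pow_le_pow_iff_right hp.one_lt).mp hle
  have hj2 : j ≤ e + 1 := by
    have hlt : p ^ j < p ^ (e + 2) := by
      calc p ^ j ≤ b := hkb
        _ ≤ 2 * a := hb
        _ < 2 * p ^ (e+1) := by omega
        _ ≤ p * p ^ (e+1) := Nat.mul_le_mul_right _ hp.two_le
        _ = p ^ (e+2) := by ring
    have := (Nat.pow_lt_pow_iff_right hp.one_lt).mp hlt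
    omega
  simp only [Finset.mem_insert, Finset.mem_singleton]
  have : j = e ∨ j = e + 1 := by omega
  rcases this with rfl | rfl
  · exact Or.inl rfl
  · exact Or.inr rfl

set_option maxHeartbeats 2000000 in
/-- The key lower bound in the proof of Lemma 4.2: with `M = X^δ`,
`Σ_{M < m ≤ 2M, gcd(m,k)=1, X ≤ mk ≤ 2X} |A(mk)| ≫ X^{1-ε/2}`. -/
theorem bilinear_absolute_value_long_lower_bound
    (δ ε : ℝ) (hδ₀ : 0 < δ) (hδ₁ : δ < 1 / 2) (hε₀ : 0 < ε) (hε₁ : ε < 1 / 2)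
    (A : ℕ → ℝ) (hA1 : A 1 = 1)
    (hmul : ∀ m n : ℕ, Nat.Coprime m n → A (m * n) = A m * A n)
    (C : ℝ) (hC : 1 ≤ C)
    (hRS : ∀ Y : ℝ, 1 ≤ Y → ∑ m ∈ Finset.Icc 1 ⌊Y⌋₊, (A m) ^ 2 ≤ C * Y)
    (hPP : ∀ ε' : ℝ, 0 < ε' → ∃ c : ℝ, 0 < c ∧ ∃ Y₀ : ℝ, ∀ Y : ℝ, Y₀ ≤ Y →
      c * Y ^ (1 - ε') ≤
        ∑ n ∈ (Finset.Icc ⌈Y⌉₊ ⌊2 * Y⌋₊).filter (fun n => IsPrimePow n), |A n|) :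
    ∃ c : ℝ, 0 < c ∧ ∃ X₀ : ℝ, ∀ X : ℝ, X₀ ≤ X →
      c * X ^ (1 - ε / 2) ≤
        ∑ m ∈ Finset.Ioc ⌊X ^ δ⌋₊ ⌊2 * X ^ δ⌋₊, ∑ k ∈ Finset.Icc 1 ⌊2 * X⌋₊,
          if Nat.Coprime m k ∧ X ≤ ((m * k : ℕ) : ℝ) ∧ ((m * k : ℕ) : ℝ) ≤ 2 * X
          then |A (m * k)| else 0 := by
  obtain ⟨c₀, hc₀, Y₀, hY₀⟩ := hPP (ε/2) (by linarith)
  set Y₁ : ℝ := max Y₀ 1 with hY₁def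
  have hY₁one : (1:ℝ) ≤ Y₁ := le_max_right _ _
  have hβ : (0:ℝ) < (1-ε)/2 := by linarith
  -- pointwise bound from Rankin–Selberg
  have hAbd : ∀ k : ℕ, 1 ≤ k → |A k| ≤ Real.sqrt (C * k) := by
    intro k hk
    have h1 : (1:ℝ) ≤ (k:ℝ) := by exact_mod_cast hk
    have h2 := hRS k h1
    rw [Nat.floor_natCast] at h2
    have h3 : A k ^ 2 ≤ C * k :=
      le_trans (Finset.single_le_sum (f := fun i => A i ^ 2) (fun i _ => sq_nonneg _)
        (Finset.mem_Icc.mpr ⟨hk, le_refl k⟩)) h2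
    calc |A k| = Real.sqrt (A k ^ 2) := (Real.sqrt_sq_eq_abs _).symm
      _ ≤ Real.sqrt (C * k) := Real.sqrt_le_sqrt h3
  -- key estimate on dyadic intervals, avoiding powers of p
  have key : ∀ Y : ℝ, Y₁ ≤ Y → 4 * Real.sqrt (2*C) ≤ c₀ * Y ^ ((1-ε)/2) →
      ∀ p : ℕ, p.Prime →
      c₀/2 * Y ^ (1 - ε/2) ≤
        ∑ k ∈ (Finset.Icc ⌈Y⌉₊ ⌊2*Y⌋₊).filter (fun k => IsPrimePow k ∧ ¬ p ∣ k), |A k| := by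
    intro Y hY hYc p hp
    have hY1 : (1:ℝ) ≤ Y := le_trans hY₁one hY
    have hY0 : (0:ℝ) < Y := by linarith
    have hYY₀ : Y₀ ≤ Y := le_trans (le_max_left _ _) hY
    have ha1 : 1 ≤ ⌈Y⌉₊ := Nat.ceil_pos.mpr hY0
    have hceil : (⌈Y⌉₊ : ℝ) ≥ Y := Nat.le_ceil Y
    have hba : ⌊2*Y⌋₊ ≤ 2 * ⌈Y⌉₊ := by
      have hfl : (⌊2*Y⌋₊ : ℝ) ≤ 2*Y := Nat.floor_le (by linarith)
      have h2 : (2*Y : ℝ) ≤ ((2 * ⌈Y⌉₊ : ℕ) : ℝ) := by push_cast; linarith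
      exact_mod_cast le_trans hfl h2
    set S := (Finset.Icc ⌈Y⌉₊ ⌊2*Y⌋₊).filter (fun k => IsPrimePow k) with hS
    -- bound on the removed (powers of p) part
    have hbadbound : ∑ k ∈ S.filter (fun k => p ∣ k), |A k| ≤ 2 * Real.sqrt (C * (2*Y)) := by
      have hsub : S.filter (fun k => p ∣ k) ⊆
          ({p ^ Nat.log p ⌈Y⌉₊, p ^ (Nat.log p ⌈Y⌉₊ + 1)} : Finset ℕ) := by
        rw [hS, Finset.filter_filter]
        exact pp_dvd_subset hp ha1 hba
      have hper : ∀ k ∈ S.filter (fun k => p ∣ k), |A k| ≤ Real.sqrt (C * (2*Y)) := by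
        intro k hk
        rw [hS, Finset.filter_filter] at hk
        simp only [Finset.mem_filter, Finset.mem_Icc] at hk
        have hk1 : 1 ≤ k := le_trans ha1 hk.1.1
        have hkY : (k:ℝ) ≤ 2*Y := (Nat.le_floor_iff (by linarith)).mp hk.1.2
        refine le_trans (hAbd k hk1) (Real.sqrt_le_sqrt ?_)
        nlinarith [hkY]
      calc ∑ k ∈ S.filter (fun k => p ∣ k), |A k|
          ≤ (S.filter (fun k => p ∣ k)).card • Real.sqrt (C * (2*Y)) :=
            Finset.sum_le_card_nsmul _ _ _ hper
        _ ≤ 2 * Real.sqrt (C * (2*Y)) := by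
            have hcard : (S.filter (fun k => p ∣ k)).card ≤ 2 := by
              refine le_trans (Finset.card_le_card hsub) ?_
              refine le_trans (Finset.card_insert_le _ _) ?_
              simp
            rw [nsmul_eq_mul]
            have hsq : (0:ℝ) ≤ Real.sqrt (C * (2*Y)) := Real.sqrt_nonneg _
            have : ((S.filter (fun k => p ∣ k)).card : ℝ) ≤ 2 := by exact_mod_cast hcard
            nlinarith
    have hmain : c₀ * Y ^ (1 - ε/2) ≤ ∑ k ∈ S, |A k| := hY₀ Y hYY₀
    have hsplit : ∑ k ∈ S.filter (fun k => ¬ p ∣ k), |A k|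
        = ∑ k ∈ S, |A k| - ∑ k ∈ S.filter (fun k => p ∣ k), |A k| := by
      have := Finset.sum_filter_add_sum_filter_not S (fun k => p ∣ k) (fun k => |A k|)
      linarith
    have hgoalset : (Finset.Icc ⌈Y⌉₊ ⌊2*Y⌋₊).filter (fun k => IsPrimePow k ∧ ¬ p ∣ k)
        = S.filter (fun k => ¬ p ∣ k) := by
      rw [hS, Finset.filter_filter]
    rw [hgoalset, hsplit]
    -- numeric inequality
    have hsqrt : Real.sqrt (C * (2*Y)) = Real.sqrt (2*C) * Y ^ (1/2:ℝ) := by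
      rw [show C * (2*Y) = (2*C) * Y by ring, Real.sqrt_mul (by linarith) Y, Real.sqrt_eq_rpow Y]
    have hpowsplit : Y ^ (1 - ε/2) = Y ^ (1/2:ℝ) * Y ^ ((1-ε)/2) := by
      rw [← Real.rpow_add hY0]; congr 1; ring
    have h12 : (0:ℝ) ≤ Y ^ (1/2:ℝ) := Real.rpow_nonneg (le_of_lt hY0) _
    rw [hpowsplit] at hmain ⊢
    rw [hsqrt] at hbadbound
    nlinarith [mul_le_mul_of_nonneg_right hYc h12, hbadbound, hmain,
      mul_nonneg (mul_nonneg (le_of_lt hc₀) h12) (Real.rpow_nonneg (le_of_lt hY0) ((1-ε)/2))]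
  -- eventual conditions
  have ht1 : Tendsto (fun X : ℝ => X ^ δ) atTop atTop := tendsto_rpow_atTop hδ₀
  have ht2 : Tendsto (fun X : ℝ => X ^ (1-δ) / 2) atTop atTop :=
    (tendsto_rpow_atTop (by linarith)).atTop_div_const (by norm_num)
  have ht3 : Tendsto (fun X : ℝ => c₀ * (X ^ δ) ^ ((1-ε)/2)) atTop atTop :=
    ((tendsto_rpow_atTop hβ).comp ht1).const_mul_atTop hc₀
  have ht4 : Tendsto (fun X : ℝ => c₀ * (X ^ (1-δ) / 2) ^ ((1-ε)/2)) atTop atTop :=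
    ((tendsto_rpow_atTop hβ).comp ht2).const_mul_atTop hc₀
  have hev : ∀ᶠ X : ℝ in atTop, (1 ≤ X) ∧ Y₁ ≤ X ^ δ ∧ Y₁ ≤ X ^ (1-δ) / 2 ∧
      4 * Real.sqrt (2*C) ≤ c₀ * (X ^ δ) ^ ((1-ε)/2) ∧
      4 * Real.sqrt (2*C) ≤ c₀ * (X ^ (1-δ) / 2) ^ ((1-ε)/2) := by
    filter_upwards [eventually_ge_atTop (1:ℝ), ht1.eventually_ge_atTop Y₁,
      ht2.eventually_ge_atTop Y₁, ht3.eventually_ge_atTop (4 * Real.sqrt (2*C)),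
      ht4.eventually_ge_atTop (4 * Real.sqrt (2*C))] with X h1 h2 h3 h4 h5
    exact ⟨h1, h2, h3, h4, h5⟩
  obtain ⟨X₀, hX₀⟩ := eventually_atTop.mp hev
  refine ⟨c₀^2/8, by positivity, X₀, ?_⟩
  intro X hX
  obtain ⟨hX1, hMY, hYY, hc1, hc2⟩ := hX₀ X hX
  have hX0 : (0:ℝ) < X := by linarith
  set M : ℝ := X ^ δ with hMdef
  have hM1 : (1:ℝ) ≤ M := le_trans hY₁one hMY
  have hM0 : (0:ℝ) < M := by linarith
  set W : ℝ := X ^ (1-δ) / 2 with hWdef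
  have hW1 : (1:ℝ) ≤ W := le_trans hY₁one hYY
  have hW0 : (0:ℝ) < W := by linarith
  -- the prime-power m set
  set Pm : Finset ℕ := (Finset.Ioc ⌊M⌋₊ ⌊2*M⌋₊).filter (fun m => IsPrimePow m) with hPm
  -- lower bound on ∑_{m ∈ Pm} |A m|
  have hSm : c₀/2 * M ^ (1 - ε/2) ≤ ∑ m ∈ Pm, |A m| := by
    set PM : Finset ℕ := (Finset.Icc ⌈M⌉₊ ⌊2*M⌋₊).filter (fun m => IsPrimePow m) with hPM
    have hmain : c₀ * M ^ (1 - ε/2) ≤ ∑ m ∈ PM, |A m| :=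
      hY₀ M (le_trans (le_max_left _ _) hMY)
    have hdiff : PM \ Pm ⊆ {⌈M⌉₊} := by
      intro x hx
      rw [Finset.mem_sdiff] at hx
      obtain ⟨hxPM, hxPm⟩ := hx
      rw [hPM, Finset.mem_filter, Finset.mem_Icc] at hxPM
      obtain ⟨⟨hx1, hx2⟩, hxpp⟩ := hxPM
      have hnot : ¬ (⌊M⌋₊ < x ∧ x ≤ ⌊2*M⌋₊) := by
        intro h
        exact hxPm (by rw [hPm, Finset.mem_filter, Finset.mem_Ioc]; exact ⟨h, hxpp⟩)
      have hfc : ⌊M⌋₊ ≤ ⌈M⌉₊ := Nat.floor_le_ceil M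
      simp only [Finset.mem_singleton]
      omega
    have hbad : ∑ m ∈ PM \ Pm, |A m| ≤ Real.sqrt (C * (2*M)) := by
      refine le_trans (Finset.sum_le_sum_of_subset_of_nonneg hdiff
        (fun i _ _ => abs_nonneg _)) ?_
      rw [Finset.sum_singleton]
      have h1 : 1 ≤ ⌈M⌉₊ := Nat.ceil_pos.mpr hM0
      refine le_trans (hAbd _ h1) (Real.sqrt_le_sqrt ?_)
      have : (⌈M⌉₊:ℝ) < M + 1 := Nat.ceil_lt_add_one (le_of_lt hM0)
      nlinarith
    have hsub : ∑ m ∈ PM, |A m| ≤ ∑ m ∈ Pm, |A m| + ∑ m ∈ PM \ Pm, |A m| := by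
      have hid := Finset.sum_inter_add_sum_sdiff PM Pm (fun m => |A m|)
      have hint : ∑ m ∈ PM ∩ Pm, |A m| ≤ ∑ m ∈ Pm, |A m| :=
        Finset.sum_le_sum_of_subset_of_nonneg (Finset.inter_subset_right)
          (fun i _ _ => abs_nonneg _)
      linarith
    -- numeric
    have hsqrt : Real.sqrt (C * (2*M)) = Real.sqrt (2*C) * M ^ (1/2:ℝ) := by
      rw [show C * (2*M) = (2*C) * M by ring, Real.sqrt_mul (by linarith) M, Real.sqrt_eq_rpow M]
    have hpowsplit : M ^ (1 - ε/2) = M ^ (1/2:ℝ) * M ^ ((1-ε)/2) := by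
      rw [← Real.rpow_add hM0]; congr 1; ring
    have h12 : (0:ℝ) ≤ M ^ (1/2:ℝ) := Real.rpow_nonneg (le_of_lt hM0) _
    rw [hpowsplit] at hmain ⊢
    rw [hsqrt] at hbad
    nlinarith [mul_le_mul_of_nonneg_right hc1 h12, hbad, hmain, hsub,
      mul_nonneg (mul_nonneg (le_of_lt hc₀) h12) (Real.rpow_nonneg (le_of_lt hM0) ((1-ε)/2))]
  -- per-m inner bound and assembly
  have hWM : W * (2*M) = X := by
    rw [hWdef, hMdef]
    rw [show X ^ (1-δ) / 2 * (2 * X ^ δ) = X ^ (1-δ) * X ^ δ by ring,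
      ← Real.rpow_add hX0, show (1-δ) + δ = (1:ℝ) by ring, Real.rpow_one]
  have hinner : ∀ m ∈ Pm, |A m| * (c₀/2 * W ^ (1 - ε/2)) ≤
      ∑ k ∈ Finset.Icc 1 ⌊2*X⌋₊,
        if Nat.Coprime m k ∧ X ≤ ((m * k : ℕ) : ℝ) ∧ ((m * k : ℕ) : ℝ) ≤ 2 * X
        then |A (m * k)| else 0 := by
    intro m hm
    simp only [hPm, Finset.mem_filter, Finset.mem_Ioc] at hm
    obtain ⟨⟨hmlo, hmhi⟩, hmpp⟩ := hm
    have hm1 : 1 ≤ m := by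
      have : 1 ≤ ⌊M⌋₊ := Nat.le_floor (by exact_mod_cast hM1)
      omega
    have hm0R : (0:ℝ) < m := by exact_mod_cast hm1
    have hm1R : (1:ℝ) ≤ m := by exact_mod_cast hm1
    have hmR : (m:ℝ) ≤ 2*M := (Nat.le_floor_iff (by linarith)).mp hmhi
    have hWm : W ≤ X / m := by
      rw [le_div_iff₀ hm0R]
      calc W * m ≤ W * (2*M) := by nlinarith
        _ = X := hWM
    have hXm0 : (0:ℝ) < X / m := lt_of_lt_of_le hW0 hWm
    obtain ⟨p, ℓ, hpP, hℓ, hpm⟩ := hmpp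
    have hp : p.Prime := Nat.prime_iff.mpr hpP
    have hcop_iff : ∀ k : ℕ, Nat.Coprime m k ↔ ¬ p ∣ k := by
      intro k
      rw [← hpm, Nat.coprime_pow_left_iff hℓ]
      exact hp.coprime_iff_not_dvd
    have hkey := key (X / m) (le_trans hYY hWm)
      (by
        refine le_trans hc2 ?_
        have h := Real.rpow_le_rpow (le_of_lt hW0) hWm (le_of_lt hβ)
        exact mul_le_mul_of_nonneg_left h (le_of_lt hc₀))
      p hp
    set G : Finset ℕ := (Finset.Icc ⌈X/m⌉₊ ⌊2*(X/m)⌋₊).filter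
      (fun k => IsPrimePow k ∧ ¬ p ∣ k) with hG
    have hGsub : G ⊆ Finset.Icc 1 ⌊2*X⌋₊ := by
      intro k hk
      simp only [hG, Finset.mem_filter, Finset.mem_Icc] at hk ⊢
      refine ⟨le_trans (Nat.ceil_pos.mpr hXm0) hk.1.1, ?_⟩
      have hkle : (k:ℝ) ≤ 2*(X/m) := (Nat.le_floor_iff (by positivity)).mp hk.1.2
      have hXmX : X / m ≤ X := div_le_self (le_of_lt hX0) hm1R
      exact Nat.le_floor (by linarith)
    have hGcond : ∀ k ∈ G, (if Nat.Coprime m k ∧ X ≤ ((m * k : ℕ) : ℝ) ∧ ((m * k : ℕ) : ℝ) ≤ 2 * X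
          then |A (m * k)| else 0) = |A m| * |A k| := by
      intro k hk
      simp only [hG, Finset.mem_filter, Finset.mem_Icc] at hk
      have hcop : Nat.Coprime m k := (hcop_iff k).mpr hk.2.2
      have hklo : X/m ≤ (k:ℝ) := le_trans (Nat.le_ceil _) (by exact_mod_cast hk.1.1)
      have hkhi : (k:ℝ) ≤ 2*(X/m) := (Nat.le_floor_iff (by positivity)).mp hk.1.2
      have hXk : X ≤ (m:ℝ) * k := by
        rw [div_le_iff₀ hm0R] at hklo
        nlinarith
      have hXk2 : (m:ℝ) * k ≤ 2 * X := by
        have h2 : 2*(X/m) * m = 2 * X := by field_simp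
        nlinarith [mul_le_mul_of_nonneg_right hkhi (le_of_lt hm0R)]
      have hb1 : X ≤ ((m * k : ℕ) : ℝ) := by push_cast; exact hXk
      have hb2 : ((m * k : ℕ) : ℝ) ≤ 2 * X := by push_cast; exact hXk2
      rw [if_pos ⟨hcop, hb1, hb2⟩, hmul _ _ hcop, abs_mul]
    have hA0 : (0:ℝ) ≤ |A m| := abs_nonneg _
    calc |A m| * (c₀/2 * W ^ (1 - ε/2))
        ≤ |A m| * (c₀/2 * (X/m) ^ (1 - ε/2)) := by
          have hle : W ^ (1 - ε/2) ≤ (X/m) ^ (1 - ε/2) :=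
            Real.rpow_le_rpow (le_of_lt hW0) hWm (by linarith)
          have h' : c₀/2 * W ^ (1 - ε/2) ≤ c₀/2 * (X/m) ^ (1 - ε/2) := by
            apply mul_le_mul_of_nonneg_left hle
            linarith
          exact mul_le_mul_of_nonneg_left h' hA0
      _ ≤ |A m| * ∑ k ∈ G, |A k| := mul_le_mul_of_nonneg_left hkey hA0
      _ = ∑ k ∈ G, (if Nat.Coprime m k ∧ X ≤ ((m * k : ℕ) : ℝ) ∧ ((m * k : ℕ) : ℝ) ≤ 2 * X
          then |A (m * k)| else 0) := by
          rw [Finset.mul_sum]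
          exact Finset.sum_congr rfl (fun k hk => (hGcond k hk).symm)
      _ ≤ ∑ k ∈ Finset.Icc 1 ⌊2*X⌋₊, (if Nat.Coprime m k ∧ X ≤ ((m * k : ℕ) : ℝ) ∧ ((m * k : ℕ) : ℝ) ≤ 2 * X
          then |A (m * k)| else 0) := by
          refine Finset.sum_le_sum_of_subset_of_nonneg hGsub (fun i _ _ => ?_)
          split
          · exact abs_nonneg _
          · exact le_rfl
  -- final assembly
  have hstep : (c₀/2 * M ^ (1 - ε/2)) * (c₀/2 * W ^ (1 - ε/2)) ≤
      ∑ m ∈ Finset.Ioc ⌊M⌋₊ ⌊2*M⌋₊, ∑ k ∈ Finset.Icc 1 ⌊2*X⌋₊,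
        if Nat.Coprime m k ∧ X ≤ ((m * k : ℕ) : ℝ) ∧ ((m * k : ℕ) : ℝ) ≤ 2 * X
        then |A (m * k)| else 0 := by
    have hWpos : (0:ℝ) ≤ c₀/2 * W ^ (1 - ε/2) := by positivity
    have h1 : (c₀/2 * M ^ (1 - ε/2)) * (c₀/2 * W ^ (1 - ε/2)) ≤
        (∑ m ∈ Pm, |A m|) * (c₀/2 * W ^ (1 - ε/2)) :=
      mul_le_mul_of_nonneg_right hSm hWpos
    have h2 : (∑ m ∈ Pm, |A m|) * (c₀/2 * W ^ (1 - ε/2)) ≤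
        ∑ m ∈ Pm, ∑ k ∈ Finset.Icc 1 ⌊2*X⌋₊,
          (if Nat.Coprime m k ∧ X ≤ ((m * k : ℕ) : ℝ) ∧ ((m * k : ℕ) : ℝ) ≤ 2 * X
          then |A (m * k)| else 0) := by
      rw [Finset.sum_mul]
      exact Finset.sum_le_sum hinner
    have h3 : ∑ m ∈ Pm, ∑ k ∈ Finset.Icc 1 ⌊2*X⌋₊,
          (if Nat.Coprime m k ∧ X ≤ ((m * k : ℕ) : ℝ) ∧ ((m * k : ℕ) : ℝ) ≤ 2 * X
          then |A (m * k)| else 0) ≤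
        ∑ m ∈ Finset.Ioc ⌊M⌋₊ ⌊2*M⌋₊, ∑ k ∈ Finset.Icc 1 ⌊2*X⌋₊,
          (if Nat.Coprime m k ∧ X ≤ ((m * k : ℕ) : ℝ) ∧ ((m * k : ℕ) : ℝ) ≤ 2 * X
          then |A (m * k)| else 0) := by
      refine Finset.sum_le_sum_of_subset_of_nonneg (Finset.filter_subset _ _)
        (fun i _ _ => Finset.sum_nonneg (fun k _ => ?_))
      split
      · exact abs_nonneg _
      · exact le_rfl
    linarith
  refine le_trans ?_ hstep
  -- (c₀/2 M^t)(c₀/2 W^t) ≥ c₀²/8 X^t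
  have hMW : M * W = X / 2 := by nlinarith [hWM]
  have hmulpow : M ^ (1 - ε/2) * W ^ (1 - ε/2) = (X/2) ^ (1 - ε/2) := by
    rw [← Real.mul_rpow (le_of_lt hM0) (le_of_lt hW0), hMW]
  have hdiv : (X/2) ^ (1 - ε/2) = X ^ (1 - ε/2) / 2 ^ (1 - ε/2) :=
    Real.div_rpow (le_of_lt hX0) (by norm_num : (0:ℝ) ≤ 2) (1 - ε/2)
  have h2pow : (2:ℝ) ^ (1 - ε/2) ≤ 2 := by
    calc (2:ℝ) ^ (1 - ε/2) ≤ 2 ^ (1:ℝ) :=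
        Real.rpow_le_rpow_of_exponent_le (by norm_num) (by linarith)
      _ = 2 := Real.rpow_one 2
  have h2pow0 : (0:ℝ) < (2:ℝ) ^ (1 - ε/2) := by positivity
  have hXp0 : (0:ℝ) ≤ X ^ (1 - ε/2) := Real.rpow_nonneg (le_of_lt hX0) _
  have hfrac : X ^ (1 - ε/2) / 2 ≤ X ^ (1 - ε/2) / 2 ^ (1 - ε/2) := by
    apply div_le_div_of_nonneg_left hXp0 h2pow0 h2pow
  calc c₀^2/8 * X ^ (1 - ε/2) = c₀^2/4 * (X ^ (1 - ε/2) / 2) := by ring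
    _ ≤ c₀^2/4 * (X ^ (1 - ε/2) / 2 ^ (1 - ε/2)) := by nlinarith
    _ = c₀^2/4 * ((X/2) ^ (1 - ε/2)) := by rw [hdiv]
    _ = (c₀/2 * M ^ (1 - ε/2)) * (c₀/2 * W ^ (1 - ε/2)) := by rw [← hmulpow]; ring
end

section
/- Let a : ℕ → ℝ, let H ≥ 1 and X ≥ 1 be integers, and let S ⊆ {X, X+1, …, 2X} be a set such that for every x ∈ S there exist integers m₁, m₂ with x ≤ m₁, m₂ ≤ x+H, a(m₁) > 0 and a(m₂) < 0. Then the number of sign changes of a with both endpoints in [X, 2X+H] is at least #S/(H+1), where a sign change is a pair of integers n < n' with a(n)·a(n') < 0 and a(k) = 0 for all n < k < n'. -/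
open Finset

lemma adj_sign_change (a : ℕ → ℝ) :
    ∀ d m M, M - m ≤ d → m < M → a m * a M < 0 →
    ∃ n n', m ≤ n ∧ n < n' ∧ n' ≤ M ∧ a n * a n' < 0 ∧
      ∀ k, n < k → k < n' → a k = 0 := by
  intro d
  induction d with
  | zero => intro m M h hlt; omega
  | succ d ih =>
    intro m M hd hlt hsign
    by_cases hz : ∀ k, m < k → k < M → a k = 0
    · exact ⟨m, M, le_rfl, hlt, le_rfl, hsign, hz⟩
    · push_neg at hz
      obtain ⟨k, hk1, hk2, hk⟩ := hz
      by_cases h1 : a m * a k < 0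
      · obtain ⟨n, n', h₁, h₂, h₃, h₄, h₅⟩ := ih m k (by omega) hk1 h1
        exact ⟨n, n', h₁, h₂, le_trans h₃ (le_of_lt hk2), h₄, h₅⟩
      · have h2 : a k * a M < 0 := by
          push_neg at h1
          by_contra hc
          push_neg at hc
          have h3 := mul_nonneg h1 hc
          have h4 : 0 < a k * a k := mul_self_pos.mpr hk
          nlinarith
        obtain ⟨n, n', h₁, h₂, h₃, h₄, h₅⟩ := ih k M (by omega) hk2 h2
        exact ⟨n, n', le_trans (le_of_lt hk1) h₁, h₂, h₃, h₄, h₅⟩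

/-- Counting deduction: if for each `x` in a set `S ⊆ [X, 2X]` the interval `[x, x+H]`
contains both a positive and a negative value of `a`, then `a` has at least `#S/(H+1)`
sign changes with both endpoints in `[X, 2X+H]`. -/
theorem sign_changes_from_short_intervals
    (a : ℕ → ℝ) (H X : ℕ) (hH : 1 ≤ H) (hX : 1 ≤ X)
    (S : Finset ℕ) (hS : S ⊆ Finset.Icc X (2 * X))
    (h : ∀ x ∈ S, ∃ m₁ m₂ : ℕ, x ≤ m₁ ∧ m₁ ≤ x + H ∧ x ≤ m₂ ∧ m₂ ≤ x + H ∧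
      0 < a m₁ ∧ a m₂ < 0) :
    (S.card : ℝ) / (H + 1) ≤
      ({p : ℕ × ℕ | X ≤ p.1 ∧ p.1 < p.2 ∧ p.2 ≤ 2 * X + H ∧ a p.1 * a p.2 < 0 ∧
        ∀ k : ℕ, p.1 < k → k < p.2 → a k = 0}.ncard : ℝ) := by
  classical
  set T : Finset (ℕ × ℕ) :=
    (Finset.Icc X (2 * X + H) ×ˢ Finset.Icc X (2 * X + H)).filter
      (fun p => p.1 < p.2 ∧ a p.1 * a p.2 < 0 ∧ ∀ k : ℕ, p.1 < k → k < p.2 → a k = 0)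
    with hT
  have hset : {p : ℕ × ℕ | X ≤ p.1 ∧ p.1 < p.2 ∧ p.2 ≤ 2 * X + H ∧ a p.1 * a p.2 < 0 ∧
      ∀ k : ℕ, p.1 < k → k < p.2 → a k = 0} = ↑T := by
    ext p
    simp only [hT, Set.mem_setOf_eq, Finset.coe_filter, Finset.mem_product,
      Finset.mem_Icc, Set.mem_setOf_eq]
    constructor
    · rintro ⟨h1, h2, h3, h4, h5⟩
      exact ⟨⟨⟨h1, by omega⟩, ⟨by omega, h3⟩⟩, h2, h4, h5⟩
    · rintro ⟨⟨⟨h1, _⟩, ⟨_, h3⟩⟩, h2, h4, h5⟩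
      exact ⟨h1, h2, h3, h4, h5⟩
  rw [hset, Set.ncard_coe_finset]
  -- key: choose a sign change pair for each x ∈ S
  have key : ∀ x, x ∈ S → ∃ p : ℕ × ℕ, p ∈ T ∧ x ≤ p.1 ∧ p.2 ≤ x + H := by
    intro x hx
    obtain ⟨m₁, m₂, hm1, hm2, hm3, hm4, hp, hn⟩ := h x hx
    set m := min m₁ m₂
    set M := max m₁ m₂
    have hmM : m < M := by
      rcases lt_trichotomy m₁ m₂ with hlt | heq | hgt
      · simp [m, M]; omega
      · exfalso; rw [heq] at hp; linarith
      · simp [m, M]; omega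
    have hsign : a m * a M < 0 := by
      rcases le_total m₁ m₂ with hle | hle
      · show a (min m₁ m₂) * a (max m₁ m₂) < 0
        rw [min_eq_left hle, max_eq_right hle]
        exact mul_neg_of_pos_of_neg hp hn
      · show a (min m₁ m₂) * a (max m₁ m₂) < 0
        rw [min_eq_right hle, max_eq_left hle]
        exact mul_neg_of_neg_of_pos hn hp
    obtain ⟨n, n', h₁, h₂, h₃, h₄, h₅⟩ := adj_sign_change a (M - m) m M le_rfl hmM hsign
    have hxS := hS hx
    rw [Finset.mem_Icc] at hxS
    have hxm : x ≤ m := le_min hm1 hm3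
    have hMx : M ≤ x + H := max_le hm2 hm4
    refine ⟨(n, n'), ?_, le_trans hxm h₁, le_trans h₃ hMx⟩
    simp only [hT, Finset.mem_filter, Finset.mem_product, Finset.mem_Icc]
    refine ⟨⟨⟨by omega, by omega⟩, ⟨by omega, by omega⟩⟩, h₂, h₄, h₅⟩
  choose! f hfT hf1 hf2 using key
  have hcard : S.card ≤ (H + 1) * T.card := by
    apply Finset.card_le_mul_card_image_of_maps_to hfT
    intro p hp
    have hsub : {x ∈ S | f x = p} ⊆ Finset.Icc (p.2 - H) p.1 := by
      intro x hx
      rw [Finset.mem_filter] at hx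
      obtain ⟨hxS, hfx⟩ := hx
      have h1 := hf1 x hxS
      have h2 := hf2 x hxS
      rw [hfx] at h1 h2
      rw [Finset.mem_Icc]; omega
    have hplt : p.1 < p.2 := by
      simp only [hT, Finset.mem_filter] at hp; exact hp.2.1
    calc #{x ∈ S | f x = p} ≤ (Finset.Icc (p.2 - H) p.1).card := Finset.card_le_card hsub
      _ = p.1 + 1 - (p.2 - H) := Nat.card_Icc _ _
      _ ≤ H + 1 := by omega
  rw [div_le_iff₀ (by positivity)]
  calc (S.card : ℝ) ≤ ((H + 1) * T.card : ℕ) := by exact_mod_cast hcard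
    _ = (T.card : ℝ) * (H + 1) := by push_cast; ring
end

section
/- For every s ∈ ℂ with s ≠ 0 and s ≠ −1, and all real numbers x > 0 and H > 0, one has the exact identity ((x+H)^s − x^s)/s = (x/(2H))·∫_{H/x}^{3H/x} x^s·((1+u)^s − 1)/s du − ((x+H)/(2H))·∫_0^{2H/(x+H)} (x+H)^s·((1+u)^s − 1)/s du, where for a positive real y and complex s, y^s := exp(s·log y) with the real logarithm. -/
open MeasureTheory

private lemma sv_cpow_ne_zero {q : ℝ} (hq : 0 < q) (w : ℂ) : ((q : ℝ) : ℂ) ^ w ≠ 0 := by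
  simp [Complex.cpow_eq_zero_iff, Complex.ofReal_eq_zero, hq.ne']

private lemma sv_div_cpow {p q : ℝ} (hp : 0 ≤ p) (hq : 0 < q) (w : ℂ) :
    ((p / q : ℝ) : ℂ) ^ w = ((p : ℝ) : ℂ) ^ w / ((q : ℝ) : ℂ) ^ w := by
  have h := Complex.mul_cpow_ofReal_nonneg (div_nonneg hp hq.le) hq.le w
  rw [← Complex.ofReal_mul, div_mul_cancel₀ _ hq.ne'] at h
  rw [h, mul_div_cancel_right₀ _ (sv_cpow_ne_zero hq w)]

private lemma sv_aux (s : ℂ) (hs1 : s ≠ -1) {a b : ℝ} (ha : 0 < 1 + a) (hb : 0 < 1 + b) :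
    (∫ u in a..b, ((((1 + u : ℝ)) : ℂ) ^ s - 1)) =
      (((1 + b : ℝ) : ℂ) ^ (s + 1) - ((1 + a : ℝ) : ℂ) ^ (s + 1)) / (s + 1) - (b - a) := by
  have hnot : (0 : ℝ) ∉ Set.uIcc (1 + a) (1 + b) := Set.notMem_uIcc_of_lt ha hb
  have hint : IntervalIntegrable (fun u : ℝ => (((1 + u : ℝ)) : ℂ) ^ s) volume a b := by
    have := (intervalIntegral.intervalIntegrable_cpow (a := 1 + a) (b := 1 + b) (r := s)
      (Or.inr hnot)).comp_add_left 1
    simpa using this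
  rw [intervalIntegral.integral_sub hint (intervalIntegrable_const)]
  have h1 : (∫ u in a..b, (((1 + u : ℝ)) : ℂ) ^ s) = ∫ v in (1 + a)..(1 + b), ((v : ℝ) : ℂ) ^ s := by
    simpa using intervalIntegral.integral_comp_add_left (fun v : ℝ => ((v : ℝ) : ℂ) ^ s) 1
  rw [h1, integral_cpow (Or.inr ⟨hs1, hnot⟩)]
  simp

/-- The Saffari–Vaughan decomposition of the Perron kernel: for `s ≠ 0, -1` and `x, H > 0`,
`((x+H)^s − x^s)/s = (x/(2H))·∫_{H/x}^{3H/x} x^s((1+u)^s−1)/s du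
  − ((x+H)/(2H))·∫_0^{2H/(x+H)} (x+H)^s((1+u)^s−1)/s du`. -/
theorem saffari_vaughan_decomposition
    (s : ℂ) (hs0 : s ≠ 0) (hs1 : s ≠ -1) (x H : ℝ) (hx : 0 < x) (hH : 0 < H) :
    (((x + H : ℝ) : ℂ) ^ s - ((x : ℝ) : ℂ) ^ s) / s =
      ((x / (2 * H) : ℝ) : ℂ) *
        (∫ u in (H / x)..(3 * H / x),
          ((x : ℝ) : ℂ) ^ s * ((((1 + u : ℝ)) : ℂ) ^ s - 1) / s) -
      (((x + H) / (2 * H) : ℝ) : ℂ) *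
        (∫ u in (0 : ℝ)..(2 * H / (x + H)),
          ((x + H : ℝ) : ℂ) ^ s * ((((1 + u : ℝ)) : ℂ) ^ s - 1) / s) := by
  have hxH : (0 : ℝ) < x + H := by linarith
  have hx3H : (0 : ℝ) < x + 3 * H := by linarith
  have hs1' : s + 1 ≠ 0 := by
    intro h; apply hs1; linear_combination h
  -- pull constants out of the integrals
  have hpull : ∀ (c : ℂ) (a b : ℝ),
      (∫ u in a..b, c * ((((1 + u : ℝ)) : ℂ) ^ s - 1) / s) =
        c / s * ∫ u in a..b, ((((1 + u : ℝ)) : ℂ) ^ s - 1) := by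
    intro c a b
    rw [← intervalIntegral.integral_const_mul]
    congr 1; ext u; ring
  rw [hpull, hpull]
  -- compute the two integrals
  have ha1 : (0 : ℝ) < 1 + H / x := by positivity
  have hb1 : (0 : ℝ) < 1 + 3 * H / x := by positivity
  have ha2 : (0 : ℝ) < 1 + (0 : ℝ) := by norm_num
  have hb2 : (0 : ℝ) < 1 + 2 * H / (x + H) := by positivity
  rw [sv_aux s hs1 ha1 hb1, sv_aux s hs1 ha2 hb2]
  -- rewrite the endpoint bases
  have e1 : (1 + H / x : ℝ) = (x + H) / x := by field_simp
  have e2 : (1 + 3 * H / x : ℝ) = (x + 3 * H) / x := by field_simp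
  have e3 : (1 + (0 : ℝ) : ℝ) = 1 := by norm_num
  have e4 : (1 + 2 * H / (x + H) : ℝ) = (x + 3 * H) / (x + H) := by
    field_simp; ring
  rw [e1, e2, e3, e4, sv_div_cpow (by linarith) hx, sv_div_cpow (by linarith) hx,
    sv_div_cpow (by linarith) hxH]
  -- express (s+1)-powers via s-powers
  have hA : ((x : ℝ) : ℂ) ≠ 0 := Complex.ofReal_ne_zero.mpr hx.ne'
  have hB : ((x + H : ℝ) : ℂ) ≠ 0 := Complex.ofReal_ne_zero.mpr hxH.ne'
  have pA : ((x : ℝ) : ℂ) ^ (s + 1) = ((x : ℝ) : ℂ) ^ s * ((x : ℝ) : ℂ) := by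
    rw [Complex.cpow_add _ _ hA, Complex.cpow_one]
  have pB : ((x + H : ℝ) : ℂ) ^ (s + 1) = ((x + H : ℝ) : ℂ) ^ s * ((x + H : ℝ) : ℂ) := by
    rw [Complex.cpow_add _ _ hB, Complex.cpow_one]
  rw [pA, pB, Complex.ofReal_one, Complex.one_cpow]
  have hAs : ((x : ℝ) : ℂ) ^ s ≠ 0 := sv_cpow_ne_zero hx s
  have hBs : ((x + H : ℝ) : ℂ) ^ s ≠ 0 := sv_cpow_ne_zero hxH s
  have hHc : ((H : ℝ) : ℂ) ≠ 0 := Complex.ofReal_ne_zero.mpr hH.ne'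
  have c1 : ((x / (2 * H) : ℝ) : ℂ) = ((x : ℝ) : ℂ) / (2 * ((H : ℝ) : ℂ)) := by
    push_cast; ring
  have c2 : (((x + H) / (2 * H) : ℝ) : ℂ) = ((x + H : ℝ) : ℂ) / (2 * ((H : ℝ) : ℂ)) := by
    push_cast; ring
  have c3 : ((3 * H / x : ℝ) : ℂ) - ((H / x : ℝ) : ℂ) = 2 * ((H : ℝ) : ℂ) / ((x : ℝ) : ℂ) := by
    push_cast; ring
  have c4 : ((2 * H / (x + H) : ℝ) : ℂ) - ((0 : ℝ) : ℂ) =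
      2 * ((H : ℝ) : ℂ) / ((x + H : ℝ) : ℂ) := by
    push_cast; ring
  rw [c1, c2, c3, c4]
  set a : ℂ := ((x : ℝ) : ℂ) with ha
  set b : ℂ := ((x + H : ℝ) : ℂ) with hb
  set h : ℂ := ((H : ℝ) : ℂ) with hh
  set C : ℂ := ((x + 3 * H : ℝ) : ℂ) ^ (s + 1) with hC
  set A : ℂ := a ^ s with hAA
  set B : ℂ := b ^ s with hBB
  clear_value a b h C A B
  set t : ℂ := s + 1 with hts
  clear_value t
  have T1 : a / (2 * h) * (A / s * ((C / (A * a) - B * b / (A * a)) / t - 2 * h / a)) =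
      (C - B * b) / (2 * h * s * t) - A / s := by
    rw [div_sub_div_same, div_div]
    rw [mul_sub, mul_sub]
    rw [div_mul_div_comm, div_mul_div_comm, div_mul_div_comm, div_mul_div_comm]
    rw [show a * (A * (C - B * b)) = (A * a) * (C - B * b) by ring,
        show 2 * h * (s * (A * a * t)) = (A * a) * (2 * h * s * t) by ring,
        mul_div_mul_left _ _ (mul_ne_zero hAs hA),
        show a * (A * (2 * h)) = (2 * h * a) * A by ring,
        show 2 * h * (s * a) = (2 * h * a) * s by ring,
        mul_div_mul_left _ _ (by simp [hHc, hA] : (2 : ℂ) * h * a ≠ 0)]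
  have T2 : b / (2 * h) * (B / s * ((C / (B * b) - 1) / t - 2 * h / b)) =
      (C - B * b) / (2 * h * s * t) - B / s := by
    rw [show (C / (B * b) - 1) = C / (B * b) - (B * b) / (B * b) by
          rw [div_self (mul_ne_zero hBs hB)],
        div_sub_div_same, div_div]
    rw [mul_sub, mul_sub]
    rw [div_mul_div_comm, div_mul_div_comm, div_mul_div_comm, div_mul_div_comm]
    rw [show b * (B * (C - B * b)) = (B * b) * (C - B * b) by ring,
        show 2 * h * (s * (B * b * t)) = (B * b) * (2 * h * s * t) by ring,
        mul_div_mul_left _ _ (mul_ne_zero hBs hB),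
        show b * (B * (2 * h)) = (2 * h * b) * B by ring,
        show 2 * h * (s * b) = (2 * h * b) * s by ring,
        mul_div_mul_left _ _ (by simp [hHc, hB] : (2 : ℂ) * h * b ≠ 0)]
  rw [T1, T2]
  ring
end

section
/- Let f : ℕ → ℂ be multiplicative (f(1) = 1 and f(mn) = f(m)·f(n) whenever gcd(m,n) = 1), let s ∈ ℂ be such that Σ_{m≥1} |f(m)|·m^{−Re s} < ∞, and let d be a squarefree positive integer such that L_p(s) := Σ_{j≥0} f(p^j)·p^{−js} ≠ 0 for every prime p dividing d. Then Σ_{m≥1, d | m} f(m)·m^{−s} = ( ∏_{p | d} p^{−s}·(Σ_{j≥0} f(p^{j+1})·p^{−js}) / L_p(s) ) · Σ_{m≥1} f(m)·m^{−s}. -/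
open Finset

section aux

variable (f : ℕ → ℂ) (s : ℂ)

private lemma cast_mul_cpow (a b : ℕ) :
    (((a * b : ℕ)) : ℂ) ^ (-s) = ((a : ℕ) : ℂ) ^ (-s) * ((b : ℕ) : ℂ) ^ (-s) := by
  push_cast
  exact Complex.natCast_mul_natCast_cpow a b (-s)

private lemma norm_term (m : ℕ+) :
    ‖f m * ((m : ℕ) : ℂ) ^ (-s)‖ = ‖f m‖ * ((m : ℕ) : ℝ) ^ (-s.re) := by
  rw [norm_mul, Complex.norm_natCast_cpow_of_pos m.pos, Complex.neg_re]

private lemma summable_term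
    (hsum : Summable fun m : ℕ+ => ‖f m‖ * ((m : ℕ) : ℝ) ^ (-s.re)) :
    Summable fun m : ℕ+ => f m * ((m : ℕ) : ℂ) ^ (-s) := by
  apply Summable.of_norm
  simpa only [norm_term] using hsum

private lemma summable_ind
    (hsum : Summable fun m : ℕ+ => ‖f m‖ * ((m : ℕ) : ℝ) ^ (-s.re)) (c : ℕ) :
    Summable fun m : ℕ+ => if c ∣ (m : ℕ) then f m * ((m : ℕ) : ℂ) ^ (-s) else 0 := by
  apply Summable.of_norm
  apply Summable.of_nonneg_of_le (fun m => norm_nonneg _)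
    (fun m => ?_) hsum
  by_cases h : c ∣ (m : ℕ)
  · simp only [h, if_true, norm_term]
    exact le_rfl
  · simp only [h, if_false, norm_zero]
    positivity

/-- The equivalence `ℕ × {n // ¬ p ∣ n} ≃ ℕ+`, `(a, n) ↦ p ^ a * n`. -/
def pEquiv (p : ℕ) (hp : p.Prime) : ℕ × {n : ℕ+ // ¬ p ∣ (n : ℕ)} ≃ ℕ+ where
  toFun x := ⟨p ^ x.1 * (x.2 : ℕ+), by
    have := (x.2 : ℕ+).pos
    have := hp.pos
    positivity⟩
  invFun m := ⟨(m : ℕ).factorization p,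
    ⟨⟨ordCompl[p] (m : ℕ), Nat.ordCompl_pos p m.ne_zero⟩,
      Nat.not_dvd_ordCompl hp m.ne_zero⟩⟩
  left_inv := by
    rintro ⟨a, n, hn⟩
    have hn0 : ((n : ℕ+) : ℕ) ≠ 0 := n.ne_zero
    have hfa : (p ^ a * ((n : ℕ+) : ℕ)).factorization p = a := by
      rw [Nat.factorization_mul (pow_ne_zero _ hp.ne_zero) hn0]
      simp [hp.factorization_pow, Nat.factorization_eq_zero_of_not_dvd hn]
    refine Prod.ext (by simpa using hfa) (Subtype.ext (PNat.coe_injective ?_))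
    show (p ^ a * (n : ℕ)) / p ^ ((p ^ a * (n : ℕ)).factorization p) = (n : ℕ)
    rw [hfa, Nat.mul_div_cancel_left _ (pow_pos hp.pos a)]
  right_inv m := PNat.coe_injective (Nat.ordProj_mul_ordCompl_eq_self (m : ℕ) p)

private lemma key_decomp (p : ℕ) (hp : p.Prime) (g : ℕ+ → ℂ) (hg : Summable g) :
    ∑' m : ℕ+, g m =
      ∑' a : ℕ, ∑' n : {n : ℕ+ // ¬ p ∣ (n : ℕ)},
        g ((pEquiv p hp) (a, n)) := by
  rw [← (pEquiv p hp).tsum_eq g]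
  exact Summable.tsum_prod ((pEquiv p hp).summable_iff.mpr hg)


private lemma step
    (hmul : ∀ m n : ℕ, Nat.Coprime m n → f (m * n) = f m * f n)
    (hsum : Summable fun m : ℕ+ => ‖f m‖ * ((m : ℕ) : ℝ) ^ (-s.re))
    (p c : ℕ) (hp : p.Prime) (hpc : ¬ p ∣ c)
    (hLp : (∑' j : ℕ, f (p ^ j) * (((p ^ j : ℕ)) : ℂ) ^ (-s)) ≠ 0) :
    (∑' m : ℕ+, if p * c ∣ (m : ℕ) then f m * (((m : ℕ)) : ℂ) ^ (-s) else 0) =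
      ((p : ℂ) ^ (-s) * (∑' j : ℕ, f (p ^ (j + 1)) * (((p ^ j : ℕ)) : ℂ) ^ (-s)) /
          (∑' j : ℕ, f (p ^ j) * (((p ^ j : ℕ)) : ℂ) ^ (-s))) *
      ∑' m : ℕ+, (if c ∣ (m : ℕ) then f m * (((m : ℕ)) : ℂ) ^ (-s) else 0) := by
  set L : ℂ := ∑' j : ℕ, f (p ^ j) * (((p ^ j : ℕ)) : ℂ) ^ (-s) with hLdef
  set A : ℂ := ∑' j : ℕ, f (p ^ (j + 1)) * (((p ^ j : ℕ)) : ℂ) ^ (-s) with hAdef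
  set S : ℂ := ∑' n : {n : ℕ+ // ¬ p ∣ (n : ℕ)},
      (if c ∣ ((n : ℕ+) : ℕ) then f ((n : ℕ+) : ℕ) * ((((n : ℕ+) : ℕ)) : ℂ) ^ (-s) else 0)
    with hSdef
  have hcp : Nat.Coprime c p := Nat.Coprime.symm ((hp.coprime_iff_not_dvd).mpr hpc)
  have hcpa : ∀ a : ℕ, Nat.Coprime c (p ^ a) := fun a => hcp.pow_right a
  have hcoords : ∀ (a : ℕ) (n : {n : ℕ+ // ¬ p ∣ (n : ℕ)}),
      (((pEquiv p hp) (a, n) : ℕ+) : ℕ) = p ^ a * ((n : ℕ+) : ℕ) := fun a n => rfl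
  have hsplit : ∀ (a : ℕ) (n : {n : ℕ+ // ¬ p ∣ (n : ℕ)}),
      f (p ^ a * ((n : ℕ+) : ℕ)) * (((p ^ a * ((n : ℕ+) : ℕ) : ℕ)) : ℂ) ^ (-s) =
      (f (p ^ a) * (((p ^ a : ℕ)) : ℂ) ^ (-s)) *
        (f ((n : ℕ+) : ℕ) * ((((n : ℕ+) : ℕ)) : ℂ) ^ (-s)) := by
    intro a n
    have hco : Nat.Coprime (p ^ a) ((n : ℕ+) : ℕ) :=
      Nat.Coprime.pow_left a ((hp.coprime_iff_not_dvd).mpr n.2)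
    rw [hmul _ _ hco, cast_mul_cpow s]
    ring
  -- (a): the series over multiples of c factors as L * S
  have ha : (∑' m : ℕ+, if c ∣ (m : ℕ) then f m * (((m : ℕ)) : ℂ) ^ (-s) else 0) = L * S := by
    rw [key_decomp p hp _ (summable_ind f s hsum c)]
    have hterm : ∀ (a : ℕ) (n : {n : ℕ+ // ¬ p ∣ (n : ℕ)}),
        (if c ∣ (((pEquiv p hp) (a, n) : ℕ+) : ℕ)
          then f (((pEquiv p hp) (a, n) : ℕ+) : ℕ) *
            (((((pEquiv p hp) (a, n) : ℕ+) : ℕ)) : ℂ) ^ (-s) else 0) =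
        (f (p ^ a) * (((p ^ a : ℕ)) : ℂ) ^ (-s)) *
          (if c ∣ ((n : ℕ+) : ℕ)
            then f ((n : ℕ+) : ℕ) * ((((n : ℕ+) : ℕ)) : ℂ) ^ (-s) else 0) := by
      intro a n
      rw [hcoords]
      by_cases h : c ∣ ((n : ℕ+) : ℕ)
      · rw [if_pos h, if_pos (Dvd.dvd.mul_left h _), hsplit]
      · rw [if_neg h, if_neg (fun hh => h (((hcpa a).dvd_mul_left).mp hh)), mul_zero]
    calc ∑' (a : ℕ) (n : {n : ℕ+ // ¬ p ∣ (n : ℕ)}),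
          (if c ∣ (((pEquiv p hp) (a, n) : ℕ+) : ℕ)
            then f (((pEquiv p hp) (a, n) : ℕ+) : ℕ) *
              (((((pEquiv p hp) (a, n) : ℕ+) : ℕ)) : ℂ) ^ (-s) else 0)
        = ∑' (a : ℕ), (f (p ^ a) * (((p ^ a : ℕ)) : ℂ) ^ (-s)) * S := by
          refine tsum_congr fun a => ?_
          rw [← tsum_mul_left]
          exact tsum_congr fun n => hterm a n
      _ = L * S := tsum_mul_right
  -- (b): the series over multiples of p*c equals (p^{-s} A) * S
  have hb : (∑' m : ℕ+, if p * c ∣ (m : ℕ) then f m * (((m : ℕ)) : ℂ) ^ (-s) else 0) =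
      ((p : ℂ) ^ (-s) * A) * S := by
    rw [key_decomp p hp _ (summable_ind f s hsum (p * c))]
    have hdvd : ∀ (a : ℕ) (n : {n : ℕ+ // ¬ p ∣ (n : ℕ)}),
        (p * c ∣ p ^ a * ((n : ℕ+) : ℕ)) ↔ (1 ≤ a ∧ c ∣ ((n : ℕ+) : ℕ)) := by
      intro a n
      constructor
      · intro h
        have hpd : p ∣ p ^ a * ((n : ℕ+) : ℕ) := (dvd_mul_right p c).trans h
        have hpa : p ∣ p ^ a := (hp.dvd_mul.mp hpd).resolve_right n.2
        have h1a : 1 ≤ a := by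
          rcases Nat.eq_zero_or_pos a with rfl | hpos
          · simp only [pow_zero, Nat.dvd_one] at hpa
            exact absurd hpa hp.ne_one
          · exact hpos
        have hcd : c ∣ ((n : ℕ+) : ℕ) :=
          ((hcpa a).dvd_mul_left).mp ((dvd_mul_left c p).trans h)
        exact ⟨h1a, hcd⟩
      · rintro ⟨h1a, hcd⟩
        exact mul_dvd_mul (dvd_pow_self p (Nat.one_le_iff_ne_zero.mp h1a)) hcd
    have hterm : ∀ (a : ℕ) (n : {n : ℕ+ // ¬ p ∣ (n : ℕ)}),
        (if p * c ∣ (((pEquiv p hp) (a, n) : ℕ+) : ℕ)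
          then f (((pEquiv p hp) (a, n) : ℕ+) : ℕ) *
            (((((pEquiv p hp) (a, n) : ℕ+) : ℕ)) : ℂ) ^ (-s) else 0) =
        (if 1 ≤ a then f (p ^ a) * (((p ^ a : ℕ)) : ℂ) ^ (-s) else 0) *
          (if c ∣ ((n : ℕ+) : ℕ)
            then f ((n : ℕ+) : ℕ) * ((((n : ℕ+) : ℕ)) : ℂ) ^ (-s) else 0) := by
      intro a n
      rw [hcoords]
      by_cases h1 : 1 ≤ a
      · by_cases h2 : c ∣ ((n : ℕ+) : ℕ)
        · rw [if_pos ((hdvd a n).mpr ⟨h1, h2⟩), if_pos h1, if_pos h2, hsplit]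
        · rw [if_neg (fun hh => h2 ((hdvd a n).mp hh).2), if_pos h1, if_neg h2, mul_zero]
      · rw [if_neg (fun hh => h1 ((hdvd a n).mp hh).1), if_neg h1, zero_mul]
    have hfirst : (∑' a : ℕ,
        (if 1 ≤ a then f (p ^ a) * (((p ^ a : ℕ)) : ℂ) ^ (-s) else 0)) =
        (p : ℂ) ^ (-s) * A := by
      have hinj : Function.Injective Nat.succ := Nat.succ_injective
      have hsupp : Function.support
          (fun a : ℕ => (if 1 ≤ a then f (p ^ a) * (((p ^ a : ℕ)) : ℂ) ^ (-s) else 0)) ⊆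
          Set.range Nat.succ := by
        intro a ha
        rcases Nat.eq_zero_or_pos a with rfl | hpos
        · simp at ha
        · exact ⟨a - 1, by omega⟩
      rw [← hinj.tsum_eq hsupp]
      have : ∀ j : ℕ,
          (if 1 ≤ Nat.succ j then f (p ^ Nat.succ j) * (((p ^ Nat.succ j : ℕ)) : ℂ) ^ (-s)
            else 0) =
          (p : ℂ) ^ (-s) * (f (p ^ (j + 1)) * (((p ^ j : ℕ)) : ℂ) ^ (-s)) := by
        intro j
        rw [if_pos (Nat.succ_le_succ (Nat.zero_le j))]
        have : (p : ℕ) ^ Nat.succ j = p * p ^ j := by rw [pow_succ']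
        rw [this, cast_mul_cpow s p (p ^ j)]
        push_cast
        ring
      rw [tsum_congr this, tsum_mul_left]
    calc ∑' (a : ℕ) (n : {n : ℕ+ // ¬ p ∣ (n : ℕ)}),
          (if p * c ∣ (((pEquiv p hp) (a, n) : ℕ+) : ℕ)
            then f (((pEquiv p hp) (a, n) : ℕ+) : ℕ) *
              (((((pEquiv p hp) (a, n) : ℕ+) : ℕ)) : ℂ) ^ (-s) else 0)
        = ∑' (a : ℕ), (if 1 ≤ a then f (p ^ a) * (((p ^ a : ℕ)) : ℂ) ^ (-s) else 0) * S := by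
          refine tsum_congr fun a => ?_
          rw [← tsum_mul_left]
          exact tsum_congr fun n => hterm a n
      _ = ((p : ℂ) ^ (-s) * A) * S := by rw [tsum_mul_right, hfirst]
  rw [hb, ha]
  field_simp

end aux

/-- Factorization of an absolutely convergent Dirichlet series of a multiplicative function
restricted to multiples of a squarefree integer `d`:
`Σ_{d ∣ m} f(m) m^{-s} = (∏_{p ∣ d} p^{-s}·(Σ_j f(p^{j+1}) p^{-js}) / (Σ_j f(p^j) p^{-js}))
  · Σ_m f(m) m^{-s}`. -/
theorem dirichlet_series_multiples_of_squarefree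
    (f : ℕ → ℂ) (hf1 : f 1 = 1)
    (hmul : ∀ m n : ℕ, Nat.Coprime m n → f (m * n) = f m * f n)
    (s : ℂ)
    (hsum : Summable fun m : ℕ+ => ‖f m‖ * ((m : ℕ) : ℝ) ^ (-s.re))
    (d : ℕ) (hd : Squarefree d)
    (hL : ∀ p ∈ d.primeFactors,
      (∑' j : ℕ, f (p ^ j) * (((p ^ j : ℕ)) : ℂ) ^ (-s)) ≠ 0) :
    (∑' m : ℕ+, if d ∣ (m : ℕ) then f m * (((m : ℕ)) : ℂ) ^ (-s) else 0) =
      (∏ p ∈ d.primeFactors,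
        ((p : ℂ) ^ (-s) * (∑' j : ℕ, f (p ^ (j + 1)) * (((p ^ j : ℕ)) : ℂ) ^ (-s)) /
          (∑' j : ℕ, f (p ^ j) * (((p ^ j : ℕ)) : ℂ) ^ (-s)))) *
      ∑' m : ℕ+, f m * (((m : ℕ)) : ℂ) ^ (-s) := by
  induction d using Nat.strong_induction_on with
  | _ d IH =>
    rcases eq_or_ne d 1 with rfl | hd1
    · simp only [Nat.primeFactors_one, Finset.prod_empty, one_mul, one_dvd, if_true]
    · have hd0 : d ≠ 0 := hd.ne_zero
      set p := d.minFac with hpdef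
      have hp : p.Prime := Nat.minFac_prime hd1
      set c := d / p with hcdef
      have hdc : d = p * c := (Nat.mul_div_cancel' (Nat.minFac_dvd d)).symm
      have hpc : ¬ p ∣ c := by
        intro h
        have : p * p ∣ d := by
          rw [hdc]; exact mul_dvd_mul_left p h
        exact hp.one_lt.ne' (Nat.isUnit_iff.mp (hd p this))
      have hc0 : c ≠ 0 := by
        intro h; rw [hdc, h, mul_zero] at hd0; exact hd0 rfl
      have hcd : c < d := Nat.div_lt_self (Nat.pos_of_ne_zero hd0) hp.one_lt
      have hcsq : Squarefree c := hd.squarefree_of_dvd ⟨p, by rw [hdc]; ring⟩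
      have hsubset : c.primeFactors ⊆ d.primeFactors :=
        Nat.primeFactors_mono ⟨p, by rw [hdc]; ring⟩ hd0
      have hLc : ∀ q ∈ c.primeFactors,
          (∑' j : ℕ, f (q ^ j) * (((q ^ j : ℕ)) : ℂ) ^ (-s)) ≠ 0 :=
        fun q hq => hL q (hsubset hq)
      have hpmem : p ∈ d.primeFactors :=
        Nat.mem_primeFactors.mpr ⟨hp, Nat.minFac_dvd d, hd0⟩
      have hppf : d.primeFactors = insert p c.primeFactors := by
        rw [hdc, Nat.primeFactors_mul hp.pos.ne' hc0, hp.primeFactors,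
          Finset.insert_eq p c.primeFactors |>.symm]
      have hpnot : p ∉ c.primeFactors := fun h => hpc (Nat.dvd_of_mem_primeFactors h)
      calc (∑' m : ℕ+, if d ∣ (m : ℕ) then f m * (((m : ℕ)) : ℂ) ^ (-s) else 0)
          = (∑' m : ℕ+, if p * c ∣ (m : ℕ) then f m * (((m : ℕ)) : ℂ) ^ (-s) else 0) := by
            rw [← hdc]
        _ = ((p : ℂ) ^ (-s) * (∑' j : ℕ, f (p ^ (j + 1)) * (((p ^ j : ℕ)) : ℂ) ^ (-s)) /
              (∑' j : ℕ, f (p ^ j) * (((p ^ j : ℕ)) : ℂ) ^ (-s))) *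
            ∑' m : ℕ+, (if c ∣ (m : ℕ) then f m * (((m : ℕ)) : ℂ) ^ (-s) else 0) :=
            step f s hmul hsum p c hp hpc (hL p hpmem)
        _ = ((p : ℂ) ^ (-s) * (∑' j : ℕ, f (p ^ (j + 1)) * (((p ^ j : ℕ)) : ℂ) ^ (-s)) /
              (∑' j : ℕ, f (p ^ j) * (((p ^ j : ℕ)) : ℂ) ^ (-s))) *
            ((∏ q ∈ c.primeFactors,
              ((q : ℂ) ^ (-s) * (∑' j : ℕ, f (q ^ (j + 1)) * (((q ^ j : ℕ)) : ℂ) ^ (-s)) /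
                (∑' j : ℕ, f (q ^ j) * (((q ^ j : ℕ)) : ℂ) ^ (-s)))) *
            ∑' m : ℕ+, f m * (((m : ℕ)) : ℂ) ^ (-s)) := by
            rw [IH c hcd hcsq hLc]
        _ = (∏ q ∈ d.primeFactors,
              ((q : ℂ) ^ (-s) * (∑' j : ℕ, f (q ^ (j + 1)) * (((q ^ j : ℕ)) : ℂ) ^ (-s)) /
                (∑' j : ℕ, f (q ^ j) * (((q ^ j : ℕ)) : ℂ) ^ (-s)))) *
            ∑' m : ℕ+, f m * (((m : ℕ)) : ℂ) ^ (-s) := by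
            rw [hppf, Finset.prod_insert hpnot, mul_assoc]
end
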